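/- arXiv:1905.09577 — 4 statements merged into one kernel-verified Lean document; each statement's English description precedes it below -/
import Mathlib

section
/- Let f₁ : X → Y, g₁ : X → X', g₂ : Y → Y', f₂ : X' → Y' be continuous surjective maps of topological spaces such that g₂ ∘ f₁ = f₂ ∘ g₁. If f₁ and g₂ are d-open, then f₂ is d-open. -/
/-- A map `f` is d-open if the image of every open set is contained in the
interior of its closure. -/
def DOpen {X Y : Type*} [TopologicalSpace X] [TopologicalSpace Y] (f : X → Y) : Prop :=
  ∀ O : Set X, IsOpen O → f '' O ⊆ interior (closure (f '' O))

namespace DOpen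

variable {X Y Z : Type*} [TopologicalSpace X] [TopologicalSpace Y] [TopologicalSpace Z]
  {f : X → Y} {g : Y → Z}

theorem comp (hg : DOpen g) (hgc : Continuous g) (hf : DOpen f) : DOpen (g ∘ f) := by
  intro O hO
  rw [Set.image_comp]
  calc g '' (f '' O) ⊆ g '' interior (closure (f '' O)) := Set.image_mono (hf O hO)
    _ ⊆ interior (closure (g '' interior (closure (f '' O)))) := hg _ isOpen_interior
    _ ⊆ interior (closure (g '' (f '' O))) := by
      refine interior_mono (closure_minimal ?_ isClosed_closure)
      calc g '' interior (closure (f '' O)) ⊆ g '' closure (f '' O) :=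
            Set.image_mono interior_subset
        _ ⊆ closure (g '' (f '' O)) := image_closure_subset_closure_image hgc

theorem of_comp (h : DOpen (g ∘ f)) (hfc : Continuous f) (hfs : Function.Surjective f) :
    DOpen g := by
  intro O hO
  have hO_eq : f '' (f ⁻¹' O) = O := Set.image_preimage_eq O hfs
  simpa only [Set.image_comp, hO_eq] using h (f ⁻¹' O) (hO.preimage hfc)

end DOpen

theorem dopen_of_commuting_square_general {X Y X' Y' : Type*} [TopologicalSpace X]
    [TopologicalSpace Y] [TopologicalSpace X'] [TopologicalSpace Y']
    (f₁ : X → Y) (g₁ : X → X') (g₂ : Y → Y') (f₂ : X' → Y')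
    (hg₁c : Continuous g₁) (hg₂c : Continuous g₂)
    (hg₁s : Function.Surjective g₁)
    (hcomm : g₂ ∘ f₁ = f₂ ∘ g₁)
    (hf₁ : DOpen f₁) (hg₂ : DOpen g₂) : DOpen f₂ := by
  have hdiag : DOpen (f₂ ∘ g₁) := hcomm ▸ hg₂.comp hg₂c hf₁
  exact hdiag.of_comp hg₁c hg₁s

/-- Commuting square lemma: if `g₂ ∘ f₁ = f₂ ∘ g₁` with all maps continuous surjective
and `f₁`, `g₂` d-open, then `f₂` is d-open. -/
theorem dopen_of_commuting_square {X Y X' Y' : Type*} [TopologicalSpace X]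
    [TopologicalSpace Y] [TopologicalSpace X'] [TopologicalSpace Y']
    (f₁ : X → Y) (g₁ : X → X') (g₂ : Y → Y') (f₂ : X' → Y')
    (hf₁c : Continuous f₁) (hg₁c : Continuous g₁) (hg₂c : Continuous g₂)
    (hf₂c : Continuous f₂)
    (hf₁s : Function.Surjective f₁) (hg₁s : Function.Surjective g₁)
    (hg₂s : Function.Surjective g₂) (hf₂s : Function.Surjective f₂)
    (hcomm : g₂ ∘ f₁ = f₂ ∘ g₁)
    (hf₁ : DOpen f₁) (hg₂ : DOpen g₂) : DOpen f₂ :=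
  dopen_of_commuting_square_general f₁ g₁ g₂ f₂ hg₁c hg₂c hg₁s hcomm hf₁ hg₂
end

section
/- Let f : G → H be a continuous surjective homomorphism of paratopological groups with H Hausdorff. If f is d-open (with respect to the original topologies), then f : G_sr → H_sr between the semiregularizations is continuous. -/
/-!
If `f` is continuous and d-open, then `int cl f⁻¹(A) ⊆ f⁻¹(int cl A)` for every `A`: the image of
the open set `int cl f⁻¹(A)` lies in `cl A`, and d-openness pushes it into `int cl A`. Hence `f`
pulls regular open sets back to regular open sets, which is continuity for the semiregularizations.
-/

/-- The semiregularization of a topology: the topology generated by the regular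
open sets `interior (closure U)` for `U` open. -/
def semireg {X : Type*} (t : TopologicalSpace X) : TopologicalSpace X :=
  TopologicalSpace.generateFrom
    {s | ∃ U : Set X, t.IsOpen U ∧ s = @interior X t (@closure X t U)}

open Set

def IsDOpenMap {X Y : Type*} [TopologicalSpace X] [TopologicalSpace Y] (f : X → Y) : Prop :=
  ∀ O : Set X, IsOpen O → f '' O ⊆ interior (closure (f '' O))

namespace IsDOpenMap

variable {X Y : Type*} [TopologicalSpace X] [TopologicalSpace Y] {f : X → Y}

theorem interior_closure_preimage_subset (hd : IsDOpenMap f) (hf : Continuous f) (A : Set Y) :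
    interior (closure (f ⁻¹' A)) ⊆ f ⁻¹' interior (closure A) := by
  rw [← image_subset_iff]
  set O := interior (closure (f ⁻¹' A))
  have hO : f '' O ⊆ closure A := calc
    f '' O ⊆ f '' closure (f ⁻¹' A) := image_mono interior_subset
    _ ⊆ closure (f '' (f ⁻¹' A)) := image_closure_subset_closure_image hf
    _ ⊆ closure A := closure_mono (image_preimage_subset f A)
  calc f '' O ⊆ interior (closure (f '' O)) := hd O isOpen_interior
    _ ⊆ interior (closure A) := interior_mono (closure_minimal hO isClosed_closure)

theorem interior_closure_preimage_interior_closure (hd : IsDOpenMap f) (hf : Continuous f)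
    (U : Set Y) :
    interior (closure (f ⁻¹' interior (closure U))) = f ⁻¹' interior (closure U) :=
  subset_antisymm
    ((hd.interior_closure_preimage_subset hf _).trans_eq (by rw [interior_closure_idem]))
    (isOpen_interior.preimage hf).subset_interior_closure

theorem continuous_semireg (hd : IsDOpenMap f) (hf : Continuous f) :
    @Continuous X Y (semireg ‹_›) (semireg ‹_›) f := by
  refine continuous_generateFrom_iff.2 ?_
  rintro _ ⟨U, -, rfl⟩
  exact TopologicalSpace.isOpen_generateFrom_of_mem
    ⟨_, isOpen_interior.preimage hf, (hd.interior_closure_preimage_interior_closure hf U).symm⟩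

end IsDOpenMap

theorem semireg_continuous_of_dopen_general {G H : Type*}
    (tG : TopologicalSpace G) (tH : TopologicalSpace H)
    (f : G → H) (hcont : @Continuous G H tG tH f)
    (hdopen : ∀ O : Set G, tG.IsOpen O →
      f '' O ⊆ @interior H tH (@closure H tH (f '' O))) :
    @Continuous G H (semireg tG) (semireg tH) f :=
  @IsDOpenMap.continuous_semireg G H tG tH f hdopen hcont

/-- If `f : G → H` is a continuous d-open surjective homomorphism of paratopological
groups with `H` Hausdorff, then `f : G_sr → H_sr` is continuous. -/
theorem semireg_continuous_of_dopen {G H : Type*} [Group G] [Group H]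
    (tG : TopologicalSpace G) (tH : TopologicalSpace H)
    (hGpara : @ContinuousMul G tG _) (hHpara : @ContinuousMul H tH _)
    (hT2 : @T2Space H tH)
    (f : G → H) (hhom : ∀ a b : G, f (a * b) = f a * f b)
    (hsurj : Function.Surjective f) (hcont : @Continuous G H tG tH f)
    (hdopen : ∀ O : Set G, tG.IsOpen O →
      f '' O ⊆ @interior H tH (@closure H tH (f '' O))) :
    @Continuous G H (semireg tG) (semireg tH) f :=
  semireg_continuous_of_dopen_general tG tH f hcont hdopen
end

section
/- Let f : G → H be a continuous d-open surjective homomorphism of paratopological groups. If G has property ω-QU, then H has property ω-QU. -/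
/-- A paratopological group `G` has property ω-QU if every continuous real-valued
function on `G` is ω-quasi-uniformly continuous: for each `ε > 0` there is a
countable family of open neighbourhoods of the identity witnessing two-sided
quasi-uniform continuity. -/
def OmegaQU (G : Type*) [Group G] [TopologicalSpace G] : Prop :=
  ∀ k : G → ℝ, Continuous k → ∀ ε : ℝ, 0 < ε →
    ∃ V : ℕ → Set G, (∀ n, IsOpen (V n) ∧ (1 : G) ∈ V n) ∧
      ∀ g : G, ∃ n, (∀ x ∈ V n, |k (g * x) - k g| < ε) ∧
        (∀ x ∈ V n, |k (x * g) - k g| < ε)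


/-!
Given `k` on `H`, apply ω-QU to `k ∘ f` with `ε / 2` and push the neighbourhoods `V n` forward to
`interior (closure (f '' V n))`: open by construction, and containing `1 = f 1` because `f` is
d-open. By continuity of `k` and of translations the strict bound `ε / 2` on `f '' V n` survives,
as a weak one, on the closure, which is why `ε` is halved. Surjectivity writes each point of `H`
as `f g`.
-/

theorem abs_sub_le_of_mem_closure {X : Type*} [TopologicalSpace X] {φ : X → ℝ}
    (hφ : Continuous φ) {S : Set X} {c δ : ℝ} (h : ∀ x ∈ S, |φ x - c| ≤ δ) {y : X}
    (hy : y ∈ closure S) : |φ y - c| ≤ δ := by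
  have hmaps : Set.MapsTo φ S (Metric.closedBall c δ) := fun x hx => by
    simpa [Metric.mem_closedBall, Real.dist_eq] using h x hx
  simpa [Metric.mem_closedBall, Real.dist_eq] using
    hmaps.closure_left hφ Metric.isClosed_closedBall hy

theorem omegaQU_of_dopen_image_general {G H : Type*} [Group G] [Group H]
    [TopologicalSpace G] [TopologicalSpace H] [ContinuousMul H]
    (f : G → H) (hhom : ∀ a b : G, f (a * b) = f a * f b)
    (hsurj : Function.Surjective f) (hcont : Continuous f) (hd : DOpen f)
    (hG : OmegaQU G) : OmegaQU H := by
  intro k hk ε hε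
  obtain ⟨V, hV, hVk⟩ := hG (k ∘ f) (hk.comp hcont) (ε / 2) (half_pos hε)
  have hf1 : f 1 = 1 := (MonoidHom.mk' f hhom).map_one
  refine ⟨fun n => interior (closure (f '' V n)),
    fun n => ⟨isOpen_interior, hd _ (hV n).1 ⟨1, (hV n).2, hf1⟩⟩, ?_⟩
  intro h
  obtain ⟨g, rfl⟩ := hsurj h
  obtain ⟨n, hleft, hright⟩ := hVk g
  have hinterior : ∀ φ : H → ℝ, Continuous φ → (∀ x ∈ V n, |φ (f x) - k (f g)| < ε / 2) →
      ∀ y ∈ interior (closure (f '' V n)), |φ y - k (f g)| < ε := fun φ hφ hφV y hy =>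
    (abs_sub_le_of_mem_closure hφ (Set.forall_mem_image.2 fun x hx => (hφV x hx).le)
      (interior_subset hy)).trans_lt (half_lt_self hε)
  refine ⟨n, hinterior _ (hk.comp (continuous_const_mul _)) ?_,
    hinterior _ (hk.comp (continuous_mul_const _)) ?_⟩
  · simpa only [Function.comp_apply, hhom] using hleft
  · simpa only [Function.comp_apply, hhom] using hright

/-- A continuous d-open surjective homomorphism of paratopological groups preserves
property ω-QU. -/
theorem omegaQU_of_dopen_image {G H : Type*} [Group G] [Group H]
    [TopologicalSpace G] [TopologicalSpace H] [ContinuousMul G] [ContinuousMul H]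
    (f : G → H) (hhom : ∀ a b : G, f (a * b) = f a * f b)
    (hsurj : Function.Surjective f) (hcont : Continuous f) (hd : DOpen f)
    (hG : OmegaQU G) : OmegaQU H :=
  omegaQU_of_dopen_image_general f hhom hsurj hcont hd hG
end

section
/- Every open subgroup of a paratopological group G is z-embedded in G. -/
/-!
An open subgroup is also closed, its complement being a union of open cosets. A nonempty
clopen set is a retract (collapse the complement to a point of the set), and composing with
the retraction extends every continuous function on the subgroup without changing its zero set.
-/

open Topology

theorem IsClopen.exists_retraction {X : Type*} [TopologicalSpace X] {s : Set X}
    (hs : IsClopen s) (x₀ : s) : ∃ r : X → s, Continuous r ∧ ∀ x : s, r x = x := by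
  classical
  let r : X → s := fun x => if h : x ∈ s then ⟨x, h⟩ else x₀
  have hr : ∀ x : s, r x = x := fun x => dif_pos x.2
  refine ⟨r, continuous_iff_continuousAt.2 fun x => ?_, hr⟩
  by_cases hx : x ∈ s
  · have hrs : ContinuousOn r s := by
      rw [continuousOn_iff_continuous_domRestrict]
      exact continuous_id.congr fun x => (hr x).symm
    exact hrs.continuousAt (hs.isOpen.mem_nhds hx)
  · have hr_const : r =ᶠ[𝓝 x] fun _ => x₀ := by
      filter_upwards [hs.isClosed.isOpen_compl.mem_nhds hx] with y hy
      exact dif_neg hy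
    exact continuousAt_const.congr hr_const.symm

/-- Every open subgroup of a paratopological group `G` is z-embedded in `G`. -/
theorem open_subgroup_zEmbedded {G : Type*} [Group G] [TopologicalSpace G]
    [ContinuousMul G] (H : Subgroup G) (hopen : IsOpen (H : Set G)) :
    ∀ k : H → ℝ, Continuous k →
      ∃ F : G → ℝ, Continuous F ∧
        (k ⁻¹' {0} : Set H) = Subtype.val ⁻¹' (F ⁻¹' {0}) := by
  intro k hk
  obtain ⟨r, hr, hr_self⟩ := (OpenSubgroup.isClopen ⟨H, hopen⟩).exists_retraction 1
  refine ⟨k ∘ r, hk.comp hr, ?_⟩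
  ext x
  simp [hr_self]
end
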